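/- arXiv:1502.00963 — 3 statements merged into one kernel-verified Lean document; each statement's English description precedes it below -/
import Mathlib

section
/- Let F be an α-strongly regular distribution (0 < α < 1) with differentiable hazard rate h(v) = f(v)/(1-F(v)) and monopoly price r (the value where the virtual valuation φ(v) = v - 1/h(v) equals zero). Then the quantile q(r) = 1 - F(r) satisfies q(r) ≥ α^{1/(1-α)}. -/
/-!
Comparing `φ v` with `φ r = 0` through strong regularity gives `1 / h v ≥ (1 - α) v + α r`
on `[0, r]`. Hence `∫₀ʳ h ≤ ∫₀ʳ dv / ((1 - α) v + α r) = log (1 / α) / (1 - α)`, and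
exponentiating yields `q r ≥ α ^ (1 / (1 - α))`.
-/

open MeasureTheory intervalIntegral

lemma inv_hazard_ge_of_strongly_regular {α r v : ℝ} {h φ : ℝ → ℝ}
    (hφ : ∀ v, φ v = v - 1 / h v)
    (hreg : ∀ x y, 0 ≤ x → x < y → φ y - φ x ≥ α * (y - x))
    (hmonop : φ r = 0) (hv0 : 0 ≤ v) (hvr : v ≤ r) :
    (1 - α) * v + α * r ≤ 1 / h v := by
  rcases hvr.lt_or_eq with hlt | rfl
  · have := hreg v r hv0 hlt
    rw [hmonop, hφ v] at this
    linarith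
  · rw [hφ] at hmonop
    linarith

lemma integral_inv_one_sub_mul_add_mul {α r : ℝ} (hα0 : 0 < α) (hα1 : α ≠ 1) (hr : 0 < r) :
    ∫ v in (0:ℝ)..r, ((1 - α) * v + α * r)⁻¹ = -Real.log α / (1 - α) := by
  have hpos : (0:ℝ) ∉ Set.uIcc (α * r) r := fun h0 =>
    (Set.mem_uIcc.mp h0).elim (fun h => by nlinarith [h.1]) (fun h => by linarith [h.1])
  rw [integral_comp_mul_add (fun x => x⁻¹) (sub_ne_zero.mpr hα1.symm), mul_zero, zero_add,
    show (1 - α) * r + α * r = r by ring, integral_inv hpos, div_mul_cancel_right₀ hr.ne',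
    Real.log_inv, smul_eq_mul]
  ring

theorem monopoly_quantile_strongly_regular_general
    (α r : ℝ) (h φ : ℝ → ℝ)
    (hα0 : 0 < α) (hα1 : α < 1) (hr : 0 < r)
    (hφ : ∀ v, φ v = v - 1 / h v)
    (hreg : ∀ x y, 0 ≤ x → x < y → φ y - φ x ≥ α * (y - x))
    (hmonop : φ r = 0)
    (hint : IntervalIntegrable h volume 0 r) :
    Real.exp (-(∫ u in (0:ℝ)..r, h u)) ≥ α ^ ((1:ℝ) / (1 - α)) := by
  have hbound : ∀ v ∈ Set.Icc 0 r, h v ≤ ((1 - α) * v + α * r)⁻¹ := fun v hv => by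
    have hlow := inv_hazard_ge_of_strongly_regular hφ hreg hmonop hv.1 hv.2
    rw [one_div] at hlow
    have hden : 0 < (1 - α) * v + α * r := by nlinarith [hv.1]
    simpa using inv_anti₀ hden hlow
  have hcont : ContinuousOn (fun v => ((1 - α) * v + α * r)⁻¹) (Set.uIcc 0 r) :=
    (by fun_prop : Continuous fun v : ℝ => (1 - α) * v + α * r).continuousOn.inv₀
      fun v hv => by
        rw [Set.uIcc_of_le hr.le] at hv
        nlinarith [hv.1]
  have hintegral := integral_mono_on hr.le hint hcont.intervalIntegrable hbound
  rw [integral_inv_one_sub_mul_add_mul hα0 hα1.ne hr, neg_div] at hintegral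
  rw [ge_iff_le, Real.rpow_def_of_pos hα0, Real.exp_le_exp, mul_one_div]
  linarith

open MeasureTheory intervalIntegral in
/-- Let `F` be an `α`-strongly regular distribution (`0 < α < 1`) with hazard rate
`h` (positive on `[0,∞)`), virtual valuation `φ v = v - 1/(h v)`, and monopoly
price `r` (where `φ r = 0`).  Then the quantile
`q r = 1 - F r = exp (-∫_0^r h)` satisfies `q r ≥ α^(1/(1-α))`. -/
theorem monopoly_quantile_strongly_regular
    (α r : ℝ) (h φ : ℝ → ℝ)
    (hα0 : 0 < α) (hα1 : α < 1) (hr : 0 < r)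
    (hpos : ∀ v, 0 ≤ v → 0 < h v)
    (hdiff : ∀ v, 0 ≤ v → DifferentiableAt ℝ h v)
    (hφ : ∀ v, φ v = v - 1 / h v)
    (hreg : ∀ x y, 0 ≤ x → x < y → φ y - φ x ≥ α * (y - x))
    (hmonop : φ r = 0)
    (hint : IntervalIntegrable h volume 0 r) :
    Real.exp (-(∫ u in (0:ℝ)..r, h u)) ≥ α ^ ((1:ℝ) / (1 - α)) :=
  monopoly_quantile_strongly_regular_general α r h φ hα0 hα1 hr hφ hreg hmonop hint
end

section
/- Let F be an MHR distribution (hazard rate h nondecreasing) with monopoly price r, i.e., φ(r) = r - 1/h(r) = 0. Then q(r) = 1 - F(r) ≥ 1/e. -/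
open MeasureTheory Set

theorem MonotoneOn.intervalIntegral_le_sub_mul {f : ℝ → ℝ} {a b : ℝ} (hab : a ≤ b)
    (hf : MonotoneOn f (Icc a b)) :
    ∫ x in a..b, f x ≤ (b - a) * f b := by
  have hfi : IntervalIntegrable f volume a b := (uIcc_of_le hab ▸ hf).intervalIntegrable
  calc ∫ x in a..b, f x
      ≤ ∫ _ in a..b, f b :=
        intervalIntegral.integral_mono_on hab hfi intervalIntegrable_const
          fun x hx => hf hx ⟨hab, le_rfl⟩ hx.2
    _ = (b - a) * f b := by rw [intervalIntegral.integral_const, smul_eq_mul]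

open MeasureTheory intervalIntegral in
theorem monopoly_quantile_mhr_general
    (r : ℝ) (h : ℝ → ℝ)
    (hr : 0 ≤ r)
    (hmono : MonotoneOn h (Set.Ici (0:ℝ)))
    (hmonop : r * h r = 1) :
    Real.exp (-(∫ u in (0:ℝ)..r, h u)) ≥ 1 / Real.exp 1 := by
  have hintegral : ∫ u in (0:ℝ)..r, h u ≤ 1 := by
    simpa [hmonop] using (hmono.mono Icc_subset_Ici_self).intervalIntegral_le_sub_mul hr
  rw [ge_iff_le, one_div, ← Real.exp_neg]
  exact Real.exp_le_exp.mpr (neg_le_neg hintegral)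

open MeasureTheory intervalIntegral in
/-- Let `F` be an MHR distribution, i.e. its hazard rate `h` is nondecreasing
on `[0,∞)`, and let `r` be its monopoly price, i.e. `r * h r = 1`
(equivalently `φ r = r - 1/(h r) = 0`).  Then the quantile
`q r = 1 - F r = exp (-∫_0^r h)` is at least `1/e`. -/
theorem monopoly_quantile_mhr
    (r : ℝ) (h : ℝ → ℝ)
    (hr : 0 ≤ r)
    (hpos : ∀ v, 0 ≤ v → 0 < h v)
    (hmono : MonotoneOn h (Set.Ici (0:ℝ)))
    (hint : IntervalIntegrable h volume 0 r)
    (hmonop : r * h r = 1) :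
    Real.exp (-(∫ u in (0:ℝ)..r, h u)) ≥ 1 / Real.exp 1 :=
  monopoly_quantile_mhr_general r h hr hmono hmonop
end

section
/- Lower bound on the virtual value gap in the truncated construction: fix α ∈ [0,1), δ ∈ (0,1], k ≥ 2. Let φ_B = (1/(1-α))·((k/δ)^{1-α} - 1) and φ_A = α·(1/(1-α))·((2k/δ)^{1-α} - 1) - 1. Then φ_B - φ_A ≥ (1/(1-α))·(k/δ)^{1-α}·(1 - α·2^{1-α}). -/
/-!
The inequality is in fact an equality. Writing `c = 1/(1-α)` and `y = (k/δ)^(1-α)`, the base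
of `φ_A` factors as `(2k/δ)^(1-α) = 2^(1-α) y`, and the constant terms `-c + αc + 1` of the gap
cancel because `c (1-α) = 1`.
-/

lemma virtual_value_gap_eq {α : ℝ} (hα : α ≠ 1) (y s : ℝ) :
    1 / (1 - α) * (y - 1) - (α * (1 / (1 - α) * (s * y - 1)) - 1)
      = 1 / (1 - α) * y * (1 - α * s) := by
  have h : 1 - α ≠ 0 := sub_ne_zero.mpr hα.symm
  field_simp
  ring

theorem virtual_value_gap_general
    (α δ k : ℝ) (hα1 : α < 1)
    (hδ0 : 0 < δ) (hk : 2 ≤ k) :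
    (1 / (1 - α)) * ((k / δ) ^ (1 - α) - 1)
        - (α * ((1 / (1 - α)) * ((2 * k / δ) ^ (1 - α) - 1)) - 1)
      ≥ (1 / (1 - α)) * (k / δ) ^ (1 - α) * (1 - α * (2:ℝ) ^ (1 - α)) := by
  have hx : 0 ≤ k / δ := div_nonneg (by linarith) hδ0.le
  rw [mul_div_assoc, Real.mul_rpow zero_le_two hx]
  exact (virtual_value_gap_eq hα1.ne _ _).ge

/-- Lower bound on the virtual value gap in the truncated construction:
for `α ∈ [0,1)`, `δ ∈ (0,1]`, `k ≥ 2`, with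
`φ_B = (1/(1-α)) * ((k/δ)^(1-α) - 1)` and
`φ_A = α * (1/(1-α)) * ((2k/δ)^(1-α) - 1) - 1`, one has
`φ_B - φ_A ≥ (1/(1-α)) * (k/δ)^(1-α) * (1 - α * 2^(1-α))`. -/
theorem virtual_value_gap
    (α δ k : ℝ) (hα0 : 0 ≤ α) (hα1 : α < 1)
    (hδ0 : 0 < δ) (hδ1 : δ ≤ 1) (hk : 2 ≤ k) :
    (1 / (1 - α)) * ((k / δ) ^ (1 - α) - 1)
        - (α * ((1 / (1 - α)) * ((2 * k / δ) ^ (1 - α) - 1)) - 1)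
      ≥ (1 / (1 - α)) * (k / δ) ^ (1 - α) * (1 - α * (2:ℝ) ^ (1 - α)) :=
  virtual_value_gap_general α δ k hα1 hδ0 hk
end
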